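/- Fix ξ ∈ ℝ, let α = ξ and ν = ξ², and let u be a normalized (α,ξ,ν)-eigenfunction. Then M₁ = u(0)²/2, M₂ = (ξ²−1)/2 + ξu(0)²/4, M₃ = (ξ²−1)u(0)²/2, and M₄ = 3/8 + (3/8)(ξ²−1)² + (u(0)²/16)(5ξ³ − 9ξ). -/

import Mathlib

/-!
Differentiating `(ξ - t) ^ j * F` for `F = u², u u', u'²` and integrating over `(0, ∞)` gives,
after substituting `u'' = ((ξ - t)² + 1 - ν) u`, three linear recurrences between the weighted
integrals of `u²`, `u u'` and `u'²`. Rapid decay kills the boundary term at infinity, and the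
Robin condition expresses the one at `0` through `u(0)²`. For `α = ξ`, `ν = ξ²` the
recurrences with `j ≤ 5` determine `M₁, …, M₄` from `M₀ = 1`.
-/

open MeasureTheory

/-- An `(α,ξ,ν)`-eigenfunction: a smooth function on `ℝ` which, together with all its
derivatives, decays faster than any polynomial on `[0,∞)`, solves
`−u'' + ((ξ−t)² + 1)u = νu` on `[0,∞)`, and satisfies the Robin condition
`u'(0) = (α−ξ)u(0)`. -/
def IsEigen (α ξ ν : ℝ) (u : ℝ → ℝ) : Prop :=
  ContDiff ℝ (⊤ : ℕ∞) u ∧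
  (∀ n k : ℕ, ∃ C : ℝ, ∀ t : ℝ, 0 ≤ t → |t| ^ k * |iteratedDeriv n u t| ≤ C) ∧
  (∀ t : ℝ, 0 ≤ t → -(deriv (deriv u) t) + ((ξ - t) ^ 2 + 1) * u t = ν * u t) ∧
  deriv u 0 = (α - ξ) * u 0

open Set Filter Topology

def RapidDecayOnIci (f : ℝ → ℝ) : Prop :=
  ∀ k : ℕ, ∃ C : ℝ, ∀ t : ℝ, 0 ≤ t → |t| ^ k * |f t| ≤ C

namespace RapidDecayOnIci

variable {f g : ℝ → ℝ}

theorem bounded (hf : RapidDecayOnIci f) : ∃ C, ∀ t, 0 ≤ t → |f t| ≤ C := by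
  obtain ⟨C, hC⟩ := hf 0
  exact ⟨C, fun t ht => by simpa using hC t ht⟩

theorem mul (hf : RapidDecayOnIci f) (hg : RapidDecayOnIci g) :
    RapidDecayOnIci fun t => f t * g t := by
  intro k
  obtain ⟨C, hC⟩ := hf k
  obtain ⟨D, hD⟩ := hg.bounded
  refine ⟨C * D, fun t ht => ?_⟩
  rw [abs_mul, ← mul_assoc]
  exact mul_le_mul (hC t ht) (hD t ht) (abs_nonneg _) (le_trans (by positivity) (hC t ht))

theorem const_sub_mul (hf : RapidDecayOnIci f) (ξ : ℝ) :
    RapidDecayOnIci fun t => (ξ - t) * f t := by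
  intro k
  obtain ⟨C, hC⟩ := hf k
  obtain ⟨D, hD⟩ := hf (k + 1)
  refine ⟨|ξ| * C + D, fun t ht => ?_⟩
  calc |t| ^ k * |(ξ - t) * f t| ≤ |t| ^ k * ((|ξ| + |t|) * |f t|) := by
        rw [abs_mul]; gcongr; exact abs_sub ξ t
    _ = |ξ| * (|t| ^ k * |f t|) + |t| ^ (k + 1) * |f t| := by ring
    _ ≤ |ξ| * C + D := add_le_add (mul_le_mul_of_nonneg_left (hC t ht) (abs_nonneg ξ)) (hD t ht)

theorem const_sub_pow_mul (hf : RapidDecayOnIci f) (ξ : ℝ) (j : ℕ) :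
    RapidDecayOnIci fun t => (ξ - t) ^ j * f t := by
  induction j with
  | zero => simpa using hf
  | succ j ih => simpa only [pow_succ', mul_assoc] using ih.const_sub_mul ξ

theorem abs_le_div_one_add_sq (hf : RapidDecayOnIci f) :
    ∃ C, ∀ t, 0 ≤ t → |f t| ≤ C / (1 + t ^ 2) := by
  obtain ⟨C₀, h₀⟩ := hf 0
  obtain ⟨C₂, h₂⟩ := hf 2
  refine ⟨C₀ + C₂, fun t ht => ?_⟩
  rw [le_div_iff₀ (by positivity)]
  have h₀t := h₀ t ht
  have h₂t := h₂ t ht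
  rw [pow_zero, one_mul] at h₀t
  rw [sq_abs] at h₂t
  linarith

theorem integrableOn_Ioi (hf : RapidDecayOnIci f) (hc : Continuous f) :
    IntegrableOn f (Ioi 0) := by
  obtain ⟨C, hC⟩ := hf.abs_le_div_one_add_sq
  refine ((integrable_inv_one_add_sq.const_mul C).integrableOn).mono'
    hc.aestronglyMeasurable.restrict ?_
  filter_upwards [ae_restrict_mem measurableSet_Ioi] with t ht
  simpa [div_eq_mul_inv] using hC t (le_of_lt ht)

theorem tendsto_atTop (hf : RapidDecayOnIci f) : Tendsto f atTop (𝓝 0) := by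
  obtain ⟨C, hC⟩ := hf.abs_le_div_one_add_sq
  have hdom : Tendsto (fun t : ℝ => C / (1 + t ^ 2)) atTop (𝓝 0) :=
    tendsto_const_nhds.div_atTop
      (tendsto_atTop_add_const_left _ 1 (tendsto_pow_atTop two_ne_zero))
  exact squeeze_zero_norm' (eventually_atTop.2 ⟨0, fun t ht => hC t ht⟩) hdom

end RapidDecayOnIci

/-- The paper's `M_j` is `halfLineMoment ξ j u u`. -/
noncomputable def halfLineMoment (ξ : ℝ) (j : ℕ) (f g : ℝ → ℝ) : ℝ :=
  ∫ t in Ioi 0, (ξ - t) ^ j * (f t * g t)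

theorem halfLineMoment_comm (ξ : ℝ) (j : ℕ) (f g : ℝ → ℝ) :
    halfLineMoment ξ j f g = halfLineMoment ξ j g f := by
  simp only [halfLineMoment, mul_comm (f _)]

theorem halfLineMoment_self (ξ : ℝ) (j : ℕ) (f : ℝ → ℝ) :
    halfLineMoment ξ j f f = ∫ t in Ioi 0, (ξ - t) ^ j * f t ^ 2 := by
  simp only [halfLineMoment, sq]

section HalfLineMoment

variable {f g : ℝ → ℝ}

theorem integrableOn_const_sub_pow_mul_mul (ξ : ℝ) (j : ℕ)
    (hf : RapidDecayOnIci f) (hg : RapidDecayOnIci g) (hfc : Continuous f) (hgc : Continuous g) :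
    IntegrableOn (fun t => (ξ - t) ^ j * (f t * g t)) (Ioi 0) :=
  ((hf.mul hg).const_sub_pow_mul ξ j).integrableOn_Ioi (by fun_prop)

theorem halfLineMoment_deriv_add (ξ : ℝ) (j : ℕ)
    (hf : Differentiable ℝ f) (hg : Differentiable ℝ g)
    (hf' : Continuous (deriv f)) (hg' : Continuous (deriv g))
    (hfd : RapidDecayOnIci f) (hgd : RapidDecayOnIci g)
    (hfd' : RapidDecayOnIci (deriv f)) (hgd' : RapidDecayOnIci (deriv g)) :
    halfLineMoment ξ j (deriv f) g + halfLineMoment ξ j f (deriv g)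
      = j * halfLineMoment ξ (j - 1) f g - ξ ^ j * (f 0 * g 0) := by
  have hfc := hf.continuous
  have hgc := hg.continuous
  have i₁ := integrableOn_const_sub_pow_mul_mul ξ j hfd' hgd hf' hgc
  have i₂ := integrableOn_const_sub_pow_mul_mul ξ j hfd hgd' hfc hg'
  have i₁₂ : IntegrableOn
      (fun t => (ξ - t) ^ j * (deriv f t * g t) + (ξ - t) ^ j * (f t * deriv g t)) (Ioi 0) :=
    i₁.add i₂
  have i₃ := (integrableOn_const_sub_pow_mul_mul ξ (j - 1) hfd hgd hfc hgc).const_mul (j : ℝ)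
  have hderiv : ∀ t ∈ Ioi (0 : ℝ), HasDerivAt (fun s => (ξ - s) ^ j * (f s * g s))
      ((ξ - t) ^ j * (deriv f t * g t) + (ξ - t) ^ j * (f t * deriv g t)
        - j * ((ξ - t) ^ (j - 1) * (f t * g t))) t := by
    intro t _
    have hw : HasDerivAt (fun s : ℝ => ξ - s) (-1) t := by
      simpa using (hasDerivAt_id t).const_sub ξ
    refine ((hw.fun_pow j).fun_mul ((hf t).hasDerivAt.fun_mul (hg t).hasDerivAt)).congr_deriv ?_
    ring
  have hibp := integral_Ioi_of_hasDerivAt_of_tendsto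
    (Continuous.continuousWithinAt (by fun_prop)) hderiv (i₁₂.sub i₃)
    ((hfd.mul hgd).const_sub_pow_mul ξ j).tendsto_atTop
  rw [integral_sub i₁₂ i₃, integral_add i₁ i₂, integral_const_mul, sub_zero] at hibp
  unfold halfLineMoment
  linarith

end HalfLineMoment

namespace IsEigen

variable {α ξ ν : ℝ} {u : ℝ → ℝ}

theorem contDiff_deriv (hu : IsEigen α ξ ν u) : ContDiff ℝ (⊤ : ℕ∞) (deriv u) :=
  (contDiff_infty_iff_deriv.mp hu.1).2

protected theorem continuous (hu : IsEigen α ξ ν u) : Continuous u :=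
  hu.1.continuous

protected theorem differentiable (hu : IsEigen α ξ ν u) : Differentiable ℝ u :=
  hu.1.differentiable (by simp)

theorem continuous_deriv (hu : IsEigen α ξ ν u) : Continuous (deriv u) :=
  hu.contDiff_deriv.continuous

theorem differentiable_deriv (hu : IsEigen α ξ ν u) : Differentiable ℝ (deriv u) :=
  hu.contDiff_deriv.differentiable (by simp)

theorem continuous_deriv_deriv (hu : IsEigen α ξ ν u) : Continuous (deriv (deriv u)) :=
  hu.contDiff_deriv.continuous_deriv (by simp)

theorem rapidDecayOnIci_iteratedDeriv (hu : IsEigen α ξ ν u) (n : ℕ) :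
    RapidDecayOnIci (iteratedDeriv n u) :=
  hu.2.1 n

theorem rapidDecayOnIci (hu : IsEigen α ξ ν u) : RapidDecayOnIci u := by
  simpa using hu.rapidDecayOnIci_iteratedDeriv 0

theorem rapidDecayOnIci_deriv (hu : IsEigen α ξ ν u) : RapidDecayOnIci (deriv u) := by
  simpa using hu.rapidDecayOnIci_iteratedDeriv 1

theorem rapidDecayOnIci_deriv_deriv (hu : IsEigen α ξ ν u) :
    RapidDecayOnIci (deriv (deriv u)) := by
  simpa [iteratedDeriv_succ] using hu.rapidDecayOnIci_iteratedDeriv 2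

theorem deriv_deriv_eq (hu : IsEigen α ξ ν u) {t : ℝ} (ht : 0 ≤ t) :
    deriv (deriv u) t = ((ξ - t) ^ 2 + 1 - ν) * u t := by
  linear_combination -(hu.2.2.1 t ht)

theorem halfLineMoment_deriv_deriv (hu : IsEigen α ξ ν u) (j : ℕ) {g : ℝ → ℝ}
    (hg : RapidDecayOnIci g) (hgc : Continuous g) :
    halfLineMoment ξ j (deriv (deriv u)) g
      = halfLineMoment ξ (j + 2) u g + (1 - ν) * halfLineMoment ξ j u g := by
  have i₁ :=
    integrableOn_const_sub_pow_mul_mul ξ (j + 2) hu.rapidDecayOnIci hg hu.continuous hgc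
  have i₂ :=
    (integrableOn_const_sub_pow_mul_mul ξ j hu.rapidDecayOnIci hg hu.continuous hgc).const_mul
      (1 - ν)
  unfold halfLineMoment
  rw [← integral_const_mul, ← integral_add i₁ i₂]
  refine setIntegral_congr_fun measurableSet_Ioi fun t ht => ?_
  rw [hu.deriv_deriv_eq (le_of_lt ht)]
  ring

theorem two_mul_halfLineMoment_deriv (hu : IsEigen α ξ ν u) (j : ℕ) :
    2 * halfLineMoment ξ j u (deriv u)
      = j * halfLineMoment ξ (j - 1) u u - ξ ^ j * u 0 ^ 2 := by
  have h := halfLineMoment_deriv_add ξ j hu.differentiable hu.differentiable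
    hu.continuous_deriv hu.continuous_deriv hu.rapidDecayOnIci hu.rapidDecayOnIci
    hu.rapidDecayOnIci_deriv hu.rapidDecayOnIci_deriv
  rw [halfLineMoment_comm ξ j (deriv u)] at h
  linear_combination h

theorem halfLineMoment_deriv_deriv_add (hu : IsEigen α ξ ν u) (j : ℕ) :
    halfLineMoment ξ j (deriv u) (deriv u) + halfLineMoment ξ (j + 2) u u
        + (1 - ν) * halfLineMoment ξ j u u
      = j * halfLineMoment ξ (j - 1) u (deriv u) - ξ ^ j * (α - ξ) * u 0 ^ 2 := by
  have h := halfLineMoment_deriv_add ξ j hu.differentiable hu.differentiable_deriv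
    hu.continuous_deriv hu.continuous_deriv_deriv hu.rapidDecayOnIci hu.rapidDecayOnIci_deriv
    hu.rapidDecayOnIci_deriv hu.rapidDecayOnIci_deriv_deriv
  rw [halfLineMoment_comm ξ j u (deriv (deriv u)),
    hu.halfLineMoment_deriv_deriv j hu.rapidDecayOnIci hu.continuous, hu.2.2.2] at h
  linear_combination h

theorem two_mul_halfLineMoment_deriv_add (hu : IsEigen α ξ ν u) (j : ℕ) :
    2 * (halfLineMoment ξ (j + 2) u (deriv u) + (1 - ν) * halfLineMoment ξ j u (deriv u))
      = j * halfLineMoment ξ (j - 1) (deriv u) (deriv u) - ξ ^ j * ((α - ξ) * u 0) ^ 2 := by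
  have h := halfLineMoment_deriv_add ξ j hu.differentiable_deriv hu.differentiable_deriv
    hu.continuous_deriv_deriv hu.continuous_deriv_deriv hu.rapidDecayOnIci_deriv
    hu.rapidDecayOnIci_deriv hu.rapidDecayOnIci_deriv_deriv hu.rapidDecayOnIci_deriv_deriv
  rw [halfLineMoment_comm ξ j (deriv u) (deriv (deriv u)),
    hu.halfLineMoment_deriv_deriv j hu.rapidDecayOnIci_deriv hu.continuous_deriv, hu.2.2.2] at h
  linear_combination h

end IsEigen

theorem moments_special_case
    (ξ : ℝ) (u : ℝ → ℝ) (hu : IsEigen ξ ξ (ξ ^ 2) u)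
    (hnorm : ∫ t in Set.Ioi (0 : ℝ), u t ^ 2 = 1) :
    (∫ t in Set.Ioi (0 : ℝ), (ξ - t) * u t ^ 2 = u 0 ^ 2 / 2) ∧
    (∫ t in Set.Ioi (0 : ℝ), (ξ - t) ^ 2 * u t ^ 2
        = (ξ ^ 2 - 1) / 2 + ξ * u 0 ^ 2 / 4) ∧
    (∫ t in Set.Ioi (0 : ℝ), (ξ - t) ^ 3 * u t ^ 2
        = (ξ ^ 2 - 1) * u 0 ^ 2 / 2) ∧
    (∫ t in Set.Ioi (0 : ℝ), (ξ - t) ^ 4 * u t ^ 2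
        = 3 / 8 + 3 / 8 * (ξ ^ 2 - 1) ^ 2 + u 0 ^ 2 / 16 * (5 * ξ ^ 3 - 9 * ξ)) := by
  have F := hu.two_mul_halfLineMoment_deriv
  have G := hu.halfLineMoment_deriv_deriv_add
  have H := hu.two_mul_halfLineMoment_deriv_add
  have M₀ : halfLineMoment ξ 0 u u = 1 := by simpa [halfLineMoment_self] using hnorm
  have M₁ : halfLineMoment ξ 1 u u = u 0 ^ 2 / 2 := by
    linear_combination (1 / 2) * H 0 - (1 / 2) * F 2 - ((1 - ξ ^ 2) / 2) * F 0
  have M₂ : halfLineMoment ξ 2 u u = (ξ ^ 2 - 1) / 2 + ξ * u 0 ^ 2 / 4 := by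
    linear_combination (1 / 4) * H 1 - (1 / 4) * F 3 - ((1 - ξ ^ 2) / 4) * F 1 + (1 / 4) * G 0
      - ((1 - ξ ^ 2) / 2) * M₀
  have M₃ : halfLineMoment ξ 3 u u = (ξ ^ 2 - 1) * u 0 ^ 2 / 2 := by
    linear_combination (1 / 6) * H 2 - (1 / 6) * F 4 - ((1 - ξ ^ 2) / 6) * F 2 + (1 / 3) * G 1
      + (1 / 6) * F 0 - (2 * (1 - ξ ^ 2) / 3) * M₁
  have M₄ : halfLineMoment ξ 4 u u
      = 3 / 8 + 3 / 8 * (ξ ^ 2 - 1) ^ 2 + u 0 ^ 2 / 16 * (5 * ξ ^ 3 - 9 * ξ) := by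
    linear_combination (1 / 8) * H 3 - (1 / 8) * F 5 - ((1 - ξ ^ 2) / 8) * F 3 + (3 / 8) * G 2
      + (3 / 8) * F 1 + (3 / 8) * M₀ - (3 * (1 - ξ ^ 2) / 4) * M₂
  rw [halfLineMoment_self] at M₁ M₂ M₃ M₄
  exact ⟨by simpa using M₁, M₂, M₃, M₄⟩
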